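/- Let n+s be even and f ∈ WRP with homogeneity exponent l for the dual g. Then Σ_{a,b ∈ SQ} Σ_{k,t ∈ F_p^*, k+t≠0} ξ_p^{-at-bk} L_v = p D_{f,sq} − ((p−1)/2) S in ℂ[(F_{p^n},+)], where v = (k^{1-l}+t^{1-l})^{1/(1-l)}, SQ is the set of nonzero squares of F_p, D_{f,sq} = {x ∈ F_{p^n}^* : f(x) ∈ SQ}, and S is the sum of all elements of F_{p^n}. -/

import Mathlib

open Finset

noncomputable def xi (p : ℕ) (a : ZMod p) : ℂ :=
  Complex.exp (2 * Real.pi * Complex.I * (a.val : ℂ) / (p : ℂ))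

noncomputable def walsh (p : ℕ) (K : Type*) [Field K] [Fintype K] [Algebra (ZMod p) K]
    (f : K → ZMod p) (β : K) : ℂ :=
  ∑ x : K, xi p (f x - (Algebra.trace (ZMod p) K) (β * x))

noncomputable def sqrtPstar (p : ℕ) : ℂ :=
  if p % 4 = 1 then (Real.sqrt p : ℂ) else Complex.I * (Real.sqrt p : ℂ)

open scoped Classical in
noncomputable def quadChar (p : ℕ) (x : ZMod p) : ℤ :=
  if x = 0 then 0 else if IsSquare x then 1 else -1

noncomputable def setElt (K : Type*) [Field K] (D : Finset K) : AddMonoidAlgebra ℂ K :=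
  ∑ x ∈ D, AddMonoidAlgebra.single x (1 : ℂ)

noncomputable def Lt (p : ℕ) [NeZero p] (K : Type*) [Field K] [Fintype K]
    (f : K → ZMod p) (t : ZMod p) : AddMonoidAlgebra ℂ K :=
  ∑ j : ZMod p, xi p (j * t) • setElt K (Finset.univ.filter fun x => f x = j)

noncomputable def epow (p m : ℕ) : ℤ := quadChar p (-1) ^ (m / 2) * (p : ℤ) ^ (m / 2)

noncomputable def setEltZ (K : Type*) [Field K] (D : Finset K) : AddMonoidAlgebra ℤ K :=
  ∑ x ∈ D, AddMonoidAlgebra.single x (1 : ℤ)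

noncomputable def isPDS (K : Type*) [Field K] [Fintype K] (D : Finset K) (d l1 l2 : ℤ) : Prop :=
  setEltZ K D * (∑ x ∈ D, AddMonoidAlgebra.single (-x) (1 : ℤ)) =
    (d - l2) • (1 : AddMonoidAlgebra ℤ K) + (l1 - l2) • setEltZ K D +
      l2 • setEltZ K Finset.univ

open scoped Classical

/-! Comparing coefficients at `x`, the identity becomes a character sum over `𝔽_p` that depends
only on `j = f x`. With `d = 1 - l` (odd, and `u ↦ u ^ d` injective on `𝔽_p^*`), the pairs
`(k, t)` are exactly the `λ • (u, v)` with `λ = V k t ≠ 0` and `(u, v)` on the Fermat curve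
`u ^ d + v ^ d = 1`, `u v ≠ 0`. Summing over `λ` leaves `p` times the number of representations
`j = a v + b u` with `a, b` nonzero squares, minus a constant. That number is counted with the
quadratic character `χ`; since `χ (u ^ d) = χ u`, the curve may be traded for
`s = u ^ d ∈ 𝔽_p \ {0, 1}`, and everything reduces to `∑ χ = 0` and the Jacobi sum
`J(χ, χ) = -χ(-1)`. -/

lemma AddChar.sum_filter_ne_zero_mulShift {R : Type*} [CommRing R] [Fintype R] [DecidableEq R]
    {ψ : AddChar R ℂ} (hψ : ψ.IsPrimitive) (c : R) :
    ∑ x ∈ univ.filter (· ≠ 0), ψ (x * c)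
      = (if c = 0 then (Fintype.card R : ℂ) else 0) - 1 := by
  rw [filter_ne', sum_erase_eq_sub (mem_univ 0), AddChar.sum_mulShift c hψ, zero_mul,
    AddChar.map_zero_eq_one, Nat.cast_ite, Nat.cast_zero]

lemma sum_mul_sum_mul_ite_sub_one {R : Type*} [AddCommGroup R] [Fintype R] [DecidableEq R]
    (α β : R → ℂ) (j : R) :
    ∑ c, α c * ∑ e, β e * ((if j - c - e = 0 then (Fintype.card R : ℂ) else 0) - 1)
      = Fintype.card R * ∑ c, α c * β (j - c) - (∑ c, α c) * ∑ e, β e := by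
  have inner : ∀ c, ∑ e, β e * ((if j - c - e = 0 then (Fintype.card R : ℂ) else 0) - 1)
      = Fintype.card R * β (j - c) - ∑ e, β e := by
    intro c
    simp only [mul_sub, mul_one, sum_sub_distrib, mul_ite, mul_zero, sub_eq_zero, sum_ite_eq,
      mem_univ, if_true, mul_comm]
  simp_rw [inner, mul_sub, sum_sub_distrib, ← sum_mul, mul_sum, mul_left_comm (α _)]

lemma xi_eq_stdAddChar (p : ℕ) [NeZero p] (a : ZMod p) : xi p a = ZMod.stdAddChar a := by
  rw [ZMod.stdAddChar_apply, ZMod.toCircle_apply]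
  rfl

section PowerMap

variable {F : Type*} [Field F] [Fintype F]

lemma injOn_pow_of_coprime {n : ℕ} (h : Nat.Coprime (Fintype.card F - 1) n) :
    Set.InjOn (fun x : F => x ^ n) {0}ᶜ := by
  intro x hx y hy hxy
  have hc : (Nat.card Fˣ).Coprime n := by rwa [Nat.card_eq_fintype_card, Fintype.card_units]
  have := (powCoprime hc).injective (a₁ := Units.mk0 x hx) (a₂ := Units.mk0 y hy)
    (by ext; exact hxy)
  exact congrArg Units.val this

lemma injOn_zpow_one_sub {l : ℕ} (hl : 0 < l) (h : Nat.gcd (l - 1) (Fintype.card F - 1) = 1) :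
    Set.InjOn (fun x : F => x ^ ((1 : ℤ) - l)) {0}ᶜ := by
  have hexp : (1 : ℤ) - l = -((l - 1 : ℕ) : ℤ) := by omega
  intro x hx y hy hxy
  simp only [hexp, zpow_neg, zpow_natCast, inv_inj] at hxy
  exact injOn_pow_of_coprime (Nat.Coprime.symm h) hx hy hxy

lemma exists_zpow_eq_of_injOn {d : ℤ} (hd : Set.InjOn (fun x : F => x ^ d) {0}ᶜ) {s : F}
    (hs : s ≠ 0) : ∃ u, u ≠ 0 ∧ u ^ d = s := by
  have hmaps : Set.MapsTo (fun x : F => x ^ d) {0}ᶜ {0}ᶜ := fun x hx => zpow_ne_zero d hx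
  exact ((Set.toFinite _).injOn_iff_bijOn_of_mapsTo hmaps).mp hd |>.surjOn hs

variable (F) in
def fermatCurve [DecidableEq F] (d : ℤ) : Finset (F × F) :=
  univ.filter fun x => x.1 ≠ 0 ∧ x.2 ≠ 0 ∧ x.1 ^ d + x.2 ^ d = 1

variable [DecidableEq F] {d : ℤ}

lemma mem_fermatCurve {x : F × F} :
    x ∈ fermatCurve F d ↔ x.1 ≠ 0 ∧ x.2 ≠ 0 ∧ x.1 ^ d + x.2 ^ d = 1 := by
  simp [fermatCurve]

lemma sum_fermatCurve (hd : Set.InjOn (fun x : F => x ^ d) {0}ᶜ) (g : F → F → ℂ) :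
    ∑ x ∈ fermatCurve F d, g (x.1 ^ d) (x.2 ^ d)
      = ∑ s ∈ univ.filter (fun s : F => s ≠ 0 ∧ s ≠ 1), g s (1 - s) := by
  have hsnd : ∀ x ∈ fermatCurve F d, x.2 ^ d = 1 - x.1 ^ d := fun x hx => by
    linear_combination (mem_fermatCurve.mp hx).2.2
  refine sum_bij (fun x _ => x.1 ^ d) (fun x hx => ?_) (fun x hx y hy hxy => ?_) (fun s hs => ?_)
    (fun x hx => by rw [hsnd x hx])
  · obtain ⟨hu, hv, -⟩ := mem_fermatCurve.mp hx
    simp only [mem_filter, mem_univ, true_and]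
    refine ⟨zpow_ne_zero d hu, fun h => zpow_ne_zero d hv ?_⟩
    rw [hsnd x hx, h, sub_self]
  · have h1 := hd (mem_fermatCurve.mp hx).1 (mem_fermatCurve.mp hy).1 hxy
    have h2 := hd (mem_fermatCurve.mp hx).2.1 (mem_fermatCurve.mp hy).2.1
      (by simp only [hsnd x hx, hsnd y hy]; rw [h1])
    exact Prod.ext h1 h2
  · simp only [mem_filter, mem_univ, true_and] at hs
    obtain ⟨u, hu, rfl⟩ := exists_zpow_eq_of_injOn hd hs.1
    obtain ⟨v, hv, hv'⟩ := exists_zpow_eq_of_injOn hd (sub_ne_zero.mpr (Ne.symm hs.2))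
    exact ⟨(u, v), mem_fermatCurve.mpr ⟨hu, hv, by rw [hv']; ring⟩, rfl⟩

lemma add_ne_zero_of_mem_fermatCurve (hd : Odd d) {x : F × F} (hx : x ∈ fermatCurve F d) :
    x.1 + x.2 ≠ 0 := by
  obtain ⟨-, -, h⟩ := mem_fermatCurve.mp hx
  intro h0
  rw [eq_neg_of_add_eq_zero_right h0, hd.neg_zpow, add_neg_cancel] at h
  exact zero_ne_one h

lemma mul_add_mul_ne_zero_of_mem_fermatCurve (hd : Odd d) {c : F} (hc : c ≠ 0) {x : F × F}
    (hx : x ∈ fermatCurve F d) : c * x.1 + c * x.2 ≠ 0 := by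
  rw [← mul_add]
  exact mul_ne_zero hc (add_ne_zero_of_mem_fermatCurve hd hx)

end PowerMap

section FermatParametrization

variable {F : Type*} [Field F] [Fintype F] [DecidableEq F] {d : ℤ} {V : F → F → F}
  (hV : ∀ k t : F, k ≠ 0 → t ≠ 0 → k + t ≠ 0 →
    V k t ≠ 0 ∧ V k t ^ d = k ^ d + t ^ d)
include hV

lemma div_mem_fermatCurve {k t : F} (hk : k ≠ 0) (ht : t ≠ 0) (hkt : k + t ≠ 0) :
    (k / V k t, t / V k t) ∈ fermatCurve F d := by
  obtain ⟨hV0, hVd⟩ := hV k t hk ht hkt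
  refine mem_fermatCurve.mpr ⟨div_ne_zero hk hV0, div_ne_zero ht hV0, ?_⟩
  rw [div_zpow, div_zpow, ← add_div, ← hVd, div_self (zpow_ne_zero d hV0)]

variable (hd_odd : Odd d) (hd : Set.InjOn (fun x : F => x ^ d) {0}ᶜ)
include hd_odd hd

lemma apply_mul_of_mem_fermatCurve {c : F} (hc : c ≠ 0) {x : F × F}
    (hx : x ∈ fermatCurve F d) : V (c * x.1) (c * x.2) = c := by
  obtain ⟨h1, h2, hsum⟩ := mem_fermatCurve.mp hx
  obtain ⟨hV0, hVd⟩ := hV _ _ (mul_ne_zero hc h1) (mul_ne_zero hc h2)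
    (mul_add_mul_ne_zero_of_mem_fermatCurve hd_odd hc hx)
  refine hd hV0 hc (show V (c * x.1) (c * x.2) ^ d = c ^ d from ?_)
  rw [hVd, mul_zpow, mul_zpow, ← mul_add, hsum, mul_one]

lemma sum_pairs_eq_sum_fermatCurve (Φ : F → F → F → ℂ) :
    ∑ k ∈ univ.filter (fun k : F => k ≠ 0),
        ∑ t ∈ univ.filter (fun t : F => t ≠ 0 ∧ k + t ≠ 0), Φ k t (V k t)
      = ∑ c ∈ univ.filter (fun c : F => c ≠ 0), ∑ x ∈ fermatCurve F d,
          Φ (c * x.1) (c * x.2) c := by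
  have hLHS : ∑ k ∈ univ.filter (fun k : F => k ≠ 0),
        ∑ t ∈ univ.filter (fun t : F => t ≠ 0 ∧ k + t ≠ 0), Φ k t (V k t)
      = ∑ y ∈ (univ.filter (fun k : F => k ≠ 0) ×ˢ univ).filter
          (fun y : F × F => y.2 ≠ 0 ∧ y.1 + y.2 ≠ 0), Φ y.1 y.2 (V y.1 y.2) := by
    simp only [sum_filter, sum_product]
  rw [hLHS, ← sum_product']
  refine sum_nbij' (fun y => (V y.1 y.2, (y.1 / V y.1 y.2, y.2 / V y.1 y.2)))
    (fun z => (z.1 * z.2.1, z.1 * z.2.2)) (fun y hy => ?_) (fun z hz => ?_) (fun y hy => ?_)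
    (fun z hz => ?_) (fun y hy => ?_)
  · simp only [mem_filter, mem_product, mem_univ, true_and] at hy ⊢
    exact ⟨(hV _ _ hy.1.1 hy.2.1 hy.2.2).1, div_mem_fermatCurve hV hy.1.1 hy.2.1 hy.2.2⟩
  · simp only [mem_filter, mem_product, mem_univ, true_and, and_true] at hz ⊢
    obtain ⟨h1, h2, -⟩ := mem_fermatCurve.mp hz.2
    exact ⟨mul_ne_zero hz.1 h1, mul_ne_zero hz.1 h2,
      mul_add_mul_ne_zero_of_mem_fermatCurve hd_odd hz.1 hz.2⟩
  · simp only [mem_filter, mem_product, mem_univ, true_and] at hy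
    have hV0 := (hV _ _ hy.1.1 hy.2.1 hy.2.2).1
    simp only [mul_div_cancel₀ _ hV0]
  · simp only [mem_product, mem_filter, mem_univ, true_and] at hz
    simp only [apply_mul_of_mem_fermatCurve hV hd_odd hd hz.1 hz.2,
      mul_div_cancel_left₀ _ hz.1]
  · simp only [mem_filter, mem_product, mem_univ, true_and] at hy
    simp only [mul_div_cancel₀ _ (hV _ _ hy.1.1 hy.2.1 hy.2.2).1]

end FermatParametrization

section QuadraticCharacter

variable (F : Type*) [Field F] [Fintype F] [DecidableEq F]

noncomputable def complexQuadraticChar : MulChar F ℂ :=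
  (quadraticChar F).ringHomComp (Int.castRingHom ℂ)

local notation "χ" => complexQuadraticChar F
local notation "q" => (Fintype.card F : ℂ)

variable {F}

lemma complexQuadraticChar_apply (x : F) : χ x = (quadraticChar F x : ℂ) := rfl

lemma complexQuadraticChar_sq (x : F) : χ x ^ 2 = if x = 0 then 0 else 1 := by
  split_ifs with hx
  · simp [complexQuadraticChar_apply, hx]
  · rw [complexQuadraticChar_apply, ← Int.cast_pow, quadraticChar_sq_one hx, Int.cast_one]

lemma complexQuadraticChar_neg_one_sq : χ (-1) ^ 2 = 1 := by
  rw [complexQuadraticChar_sq, if_neg (neg_ne_zero.mpr one_ne_zero)]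

lemma ite_ne_zero_and_isSquare (x : F) :
    (if x ≠ 0 ∧ IsSquare x then (1 : ℂ) else 0) = (χ x ^ 2 + χ x) / 2 := by
  by_cases hx : x = 0
  · simp [hx, complexQuadraticChar_apply]
  rw [complexQuadraticChar_apply]
  by_cases hsq : IsSquare x
  · rw [if_pos ⟨hx, hsq⟩, (quadraticChar_one_iff_isSquare hx).mpr hsq]
    norm_num
  · rw [if_neg (fun h => hsq h.2), quadraticChar_neg_one_iff_not_isSquare.mpr hsq]
    norm_num

lemma complexQuadraticChar_zpow_of_odd {d : ℤ} (hd : Odd d) (x : F) : χ (x ^ d) = χ x := by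
  by_cases hx : x = 0
  · rw [hx, zero_zpow d (by rintro rfl; exact Int.not_odd_zero hd)]
  obtain ⟨m, rfl⟩ := hd
  rw [zpow_add_one₀ hx, zpow_mul', map_mul, zpow_two, map_mul, ← sq, complexQuadraticChar_sq,
    if_neg (zpow_ne_zero m hx), one_mul]

lemma sum_complexQuadraticChar_sq : ∑ x, χ x ^ 2 = q - 1 := by
  simp_rw [complexQuadraticChar_sq]
  simp [sum_ite, filter_ne', Nat.cast_sub Fintype.card_pos]

lemma sum_sq_mul_sq_sub (j : F) :
    ∑ c, χ c ^ 2 * χ (j - c) ^ 2 = q - 2 + if j = 0 then 1 else 0 := by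
  have hpt : ∀ c : F, χ c ^ 2 * χ (j - c) ^ 2
      = 1 - (if c = 0 then 1 else 0) - (if c = j then 1 else 0)
        + (if c = 0 then 1 else 0) * (if j = 0 then 1 else 0) := by
    intro c
    simp only [complexQuadraticChar_sq, sub_eq_zero]
    by_cases h0 : c = 0 <;> by_cases hj : j = c <;> simp_all [eq_comm]
  simp only [hpt, sum_add_distrib, sum_sub_distrib, ← sum_mul, sum_ite_eq', mem_univ, if_true,
    sum_const, card_univ, nsmul_eq_mul, mul_one]
  split_ifs <;> ring

lemma sum_filter_isSquare_mul {u : F} (hu : u ≠ 0) (G : F → ℂ) :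
    ∑ a ∈ univ.filter (fun a : F => a ≠ 0 ∧ IsSquare a), G (a * u)
      = ∑ c, (χ c ^ 2 + χ u * χ c) / 2 * G c := by
  have hu2 : χ u ^ 2 = 1 := by rw [complexQuadraticChar_sq, if_neg hu]
  rw [sum_filter]
  refine Fintype.sum_equiv (Equiv.mulRight₀ u hu) _ _ fun a => ?_
  rw [← one_mul (G (a * u)), ← ite_zero_mul, ite_ne_zero_and_isSquare, Equiv.mulRight₀_apply,
    map_mul, mul_pow]
  linear_combination -((χ a ^ 2 + χ a) * G (a * u)) / 2 * hu2

variable (hF : ringChar F ≠ 2)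
include hF

lemma complexQuadraticChar_ne_one : χ ≠ 1 :=
  (MulChar.ringHomComp_ne_one_iff Int.cast_injective).mpr (quadraticChar_ne_one hF)

lemma sum_complexQuadraticChar : ∑ x, χ x = 0 :=
  MulChar.sum_eq_zero_of_ne_one (complexQuadraticChar_ne_one hF)

lemma sum_complexQuadraticChar_mul_one_sub : ∑ x, χ x * χ (1 - x) = -χ (-1) := by
  have hinv : χ⁻¹ = χ := ((quadraticChar_isQuadratic F).comp _).inv
  rw [← jacobiSum_nontrivial_inv (complexQuadraticChar_ne_one hF), hinv, jacobiSum]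

lemma sum_mul_sq_sub (j : F) : ∑ c, χ c * χ (j - c) ^ 2 = -χ j := by
  have hpt : ∀ c, χ c * χ (j - c) ^ 2 = χ c - if j = c then χ c else 0 := by
    intro c
    simp only [complexQuadraticChar_sq, sub_eq_zero]
    split_ifs <;> simp_all
  simp only [hpt, sum_sub_distrib, sum_ite_eq, mem_univ, if_true, sum_complexQuadraticChar hF,
    zero_sub]

lemma sum_sq_mul_sub (j : F) : ∑ c, χ c ^ 2 * χ (j - c) = -χ j := by
  rw [← sum_mul_sq_sub hF j]
  exact Fintype.sum_equiv (Equiv.subLeft j) _ _ fun c => by simp [mul_comm]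

lemma sum_mul_sub (j : F) :
    ∑ c, χ c * χ (j - c) = if j = 0 then χ (-1) * (q - 1) else -χ (-1) := by
  split_ifs with hj
  · have hpt : ∀ c : F, χ c * χ (j - c) = χ (-1) * χ c ^ 2 := fun c => by
      rw [hj, zero_sub, neg_eq_neg_one_mul, map_mul]
      ring
    rw [sum_congr rfl fun c _ => hpt c, ← mul_sum, sum_complexQuadraticChar_sq]
  · have hj2 : χ j ^ 2 = 1 := by rw [complexQuadraticChar_sq, if_neg hj]
    rw [← sum_complexQuadraticChar_mul_one_sub hF]
    refine (Fintype.sum_equiv (Equiv.mulLeft₀ j hj) _ _ fun e => ?_).symm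
    rw [Equiv.mulLeft₀_apply, show j - j * e = j * (1 - e) by ring, map_mul, map_mul]
    linear_combination -(χ e * χ (1 - e)) * hj2

lemma sum_sq_add_mul_div_two (u : F) : ∑ c, (χ c ^ 2 + χ u * χ c) / 2 = (q - 1) / 2 := by
  rw [← sum_div, sum_add_distrib, ← mul_sum, sum_complexQuadraticChar_sq,
    sum_complexQuadraticChar hF, mul_zero, add_zero]

lemma sum_sq_add_mul_div_two_mul_sub (u v j : F) :
    ∑ c, (χ c ^ 2 + χ u * χ c) / 2 * ((χ (j - c) ^ 2 + χ v * χ (j - c)) / 2)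
      = ((q - 2 + if j = 0 then 1 else 0) - χ j * χ u - χ j * χ v
          + (if j = 0 then χ (-1) * (q - 1) else -χ (-1)) * χ u * χ v) / 4 := by
  have hpt : ∀ c, (χ c ^ 2 + χ u * χ c) / 2 * ((χ (j - c) ^ 2 + χ v * χ (j - c)) / 2)
      = (χ c ^ 2 * χ (j - c) ^ 2 + χ v * (χ c ^ 2 * χ (j - c)) + χ u * (χ c * χ (j - c) ^ 2)
          + χ u * χ v * (χ c * χ (j - c))) / 4 := fun c => by ring
  simp only [hpt, ← sum_div, sum_add_distrib, ← mul_sum, sum_sq_mul_sq_sub,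
    sum_sq_mul_sub hF, sum_mul_sq_sub hF, sum_mul_sub hF]
  ring

lemma sum_filter_isSquare_sum_filter_isSquare {u v : F} (hu : u ≠ 0) (hv : v ≠ 0) (j : F) :
    ∑ a ∈ univ.filter (fun a : F => a ≠ 0 ∧ IsSquare a),
      ∑ b ∈ univ.filter (fun b : F => b ≠ 0 ∧ IsSquare b),
        ((if j - a * v - b * u = 0 then q else 0) - 1)
      = q * ((q - 2 + if j = 0 then 1 else 0) - χ j * χ u - χ j * χ v
          + (if j = 0 then χ (-1) * (q - 1) else -χ (-1)) * χ u * χ v) / 4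
        - ((q - 1) / 2) ^ 2 := by
  have inner : ∀ c, ∑ b ∈ univ.filter (fun b : F => b ≠ 0 ∧ IsSquare b),
      ((if j - c - b * u = 0 then q else 0) - 1)
        = ∑ e, (χ e ^ 2 + χ u * χ e) / 2 * ((if j - c - e = 0 then q else 0) - 1) :=
    fun c => sum_filter_isSquare_mul hu fun z => (if j - c - z = 0 then q else 0) - 1
  refine (sum_filter_isSquare_mul hv fun y =>
    ∑ b ∈ univ.filter (fun b : F => b ≠ 0 ∧ IsSquare b),
      ((if j - y - b * u = 0 then q else 0) - 1)).trans ?_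
  simp_rw [inner]
  rw [sum_mul_sum_mul_ite_sub_one, sum_sq_add_mul_div_two_mul_sub hF,
    sum_sq_add_mul_div_two hF, sum_sq_add_mul_div_two hF]
  ring

lemma sum_ne_zero_ne_one_complexQuadraticChar (A B C D : ℂ) :
    ∑ s ∈ univ.filter (fun s : F => s ≠ 0 ∧ s ≠ 1),
        (A + B * χ s + C * χ (1 - s) + D * (χ s * χ (1 - s)))
      = (q - 2) * A - B - C - D * χ (-1) := by
  have hfilter : univ.filter (fun s : F => s ≠ 0 ∧ s ≠ 1) = (univ.erase 0).erase 1 := by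
    ext s
    simp [and_comm]
  have hsymm : ∑ s : F, χ (1 - s) = 0 := by
    rw [← sum_complexQuadraticChar hF]
    exact Fintype.sum_equiv (Equiv.subLeft 1) _ _ fun s => rfl
  rw [hfilter, sum_erase_eq_sub (mem_erase.mpr ⟨one_ne_zero, mem_univ 1⟩),
    sum_erase_eq_sub (mem_univ 0)]
  simp only [sum_add_distrib, ← mul_sum, sum_complexQuadraticChar hF, hsymm,
    sum_complexQuadraticChar_mul_one_sub hF, sum_const, card_univ, nsmul_eq_mul, sub_zero,
    sub_self, MulChar.map_zero, MulChar.map_one]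
  ring

theorem sum_isSquare_sum_isSquare_sum_pairs {ψ : AddChar F ℂ} (hψ : ψ.IsPrimitive) {d : ℤ}
    (hd_odd : Odd d) (hd : Set.InjOn (fun x : F => x ^ d) {0}ᶜ) (V : F → F → F)
    (hV : ∀ k t : F, k ≠ 0 → t ≠ 0 → k + t ≠ 0 →
      V k t ≠ 0 ∧ V k t ^ d = k ^ d + t ^ d)
    (j : F) :
    ∑ a ∈ univ.filter (fun a : F => a ≠ 0 ∧ IsSquare a),
      ∑ b ∈ univ.filter (fun b : F => b ≠ 0 ∧ IsSquare b),
        ∑ k ∈ univ.filter (fun k : F => k ≠ 0),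
          ∑ t ∈ univ.filter (fun t : F => t ≠ 0 ∧ k + t ≠ 0),
            ψ (-(a * t) - b * k) * ψ (j * V k t)
      = q * (if j ≠ 0 ∧ IsSquare j then 1 else 0) - (q - 1) / 2 := by
  have hpairs : ∀ a b, ∑ k ∈ univ.filter (fun k : F => k ≠ 0),
      ∑ t ∈ univ.filter (fun t : F => t ≠ 0 ∧ k + t ≠ 0),
        ψ (-(a * t) - b * k) * ψ (j * V k t)
        = ∑ x ∈ fermatCurve F d, ((if j - a * x.2 - b * x.1 = 0 then q else 0) - 1) := by
    intro a b
    refine (sum_pairs_eq_sum_fermatCurve hV hd_odd hd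
      fun k t c => ψ (-(a * t) - b * k) * ψ (j * c)).trans ?_
    rw [sum_comm]
    refine sum_congr rfl fun x _ => ?_
    rw [← AddChar.sum_filter_ne_zero_mulShift hψ]
    refine sum_congr rfl fun c _ => ?_
    rw [← AddChar.map_add_eq_mul]
    congr 1
    ring
  set A : ℂ := q * (q - 2 + if j = 0 then 1 else 0) / 4 - ((q - 1) / 2) ^ 2
  set B : ℂ := -(q * χ j) / 4
  set D : ℂ := q * (if j = 0 then χ (-1) * (q - 1) else -χ (-1)) / 4
  calc _ = ∑ x ∈ fermatCurve F d, ∑ a ∈ univ.filter (fun a : F => a ≠ 0 ∧ IsSquare a),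
        ∑ b ∈ univ.filter (fun b : F => b ≠ 0 ∧ IsSquare b),
          ((if j - a * x.2 - b * x.1 = 0 then q else 0) - 1) := by
        simp only [hpairs]
        exact (sum_congr rfl fun a _ => sum_comm).trans sum_comm
    _ = ∑ x ∈ fermatCurve F d, (A + B * χ (x.1 ^ d) + B * χ (x.2 ^ d)
          + D * (χ (x.1 ^ d) * χ (x.2 ^ d))) := by
        refine sum_congr rfl fun x hx => ?_
        obtain ⟨h1, h2, -⟩ := mem_fermatCurve.mp hx
        rw [sum_filter_isSquare_sum_filter_isSquare hF h1 h2,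
          complexQuadraticChar_zpow_of_odd hd_odd, complexQuadraticChar_zpow_of_odd hd_odd]
        ring
    _ = ∑ s ∈ univ.filter (fun s : F => s ≠ 0 ∧ s ≠ 1),
          (A + B * χ s + B * χ (1 - s) + D * (χ s * χ (1 - s))) :=
        sum_fermatCurve hd fun s t => A + B * χ s + B * χ t + D * (χ s * χ t)
    _ = (q - 2) * A - B - B - D * χ (-1) :=
        sum_ne_zero_ne_one_complexQuadraticChar hF A B B D
    _ = _ := by
        have hχ : χ (-1) ^ 2 = 1 := complexQuadraticChar_neg_one_sq
        rw [ite_ne_zero_and_isSquare]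
        by_cases hj : j = 0
        · simp only [A, B, D, hj, if_true, MulChar.map_zero]
          linear_combination -q * (q - 1) / 4 * hχ
        · simp only [A, B, D, hj, if_false, complexQuadraticChar_sq]
          linear_combination q / 4 * hχ

end QuadraticCharacter

section GroupAlgebra

variable {K : Type*} [Field K] [DecidableEq K]

lemma setElt_coeff (D : Finset K) (x : K) : (setElt K D).coeff x = if x ∈ D then 1 else 0 := by
  simp [setElt, Finsupp.single_apply]

lemma Lt_coeff {p : ℕ} [NeZero p] [Fintype K] (f : K → ZMod p) (v : ZMod p) (x : K) :
    (Lt p K f v).coeff x = xi p (f x * v) := by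
  simp [Lt, setElt_coeff]

end GroupAlgebra

theorem stmt_15_general (p : ℕ) [Fact p.Prime] [NeZero p] (hodd : Odd p)
    (K : Type) [Field K] [Fintype K] [DecidableEq K]
    (f : K → ZMod p)
    (hf0 : f 0 = 0)
    (l : ℕ) (hleven : Even l) (hlpos : 0 < l) (hlgcd : Nat.gcd (l - 1) (p - 1) = 1)
    (V : ZMod p → ZMod p → ZMod p)
    (hV : ∀ k t : ZMod p, k ≠ 0 → t ≠ 0 → k + t ≠ 0 →
      V k t ≠ 0 ∧ V k t ^ ((1 : ℤ) - l) = k ^ ((1 : ℤ) - l) + t ^ ((1 : ℤ) - l)) :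
    ∑ a ∈ Finset.univ.filter (fun a : ZMod p => a ≠ 0 ∧ IsSquare a),
        ∑ b ∈ Finset.univ.filter (fun b : ZMod p => b ≠ 0 ∧ IsSquare b),
          ∑ k ∈ Finset.univ.filter (fun k : ZMod p => k ≠ 0),
            ∑ t ∈ Finset.univ.filter (fun t : ZMod p => t ≠ 0 ∧ k + t ≠ 0),
              xi p (-(a * t) - b * k) • Lt p K f (V k t) =
      (p : ℂ) • setElt K (Finset.univ.filter fun x : K => x ≠ 0 ∧ f x ≠ 0 ∧ IsSquare (f x)) - (((p : ℂ) - 1) / 2) • setElt K Finset.univ := by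
  have hF : ringChar (ZMod p) ≠ 2 := by
    rw [ZMod.ringChar_zmod_n]
    rintro rfl
    exact Nat.not_odd_iff_even.mpr even_two hodd
  have hd_odd : Odd ((1 : ℤ) - l) := odd_one.sub_even hleven.natCast
  have hd := injOn_zpow_one_sub (F := ZMod p) hlpos (by rwa [ZMod.card])
  refine AddMonoidAlgebra.coeff_injective (Finsupp.ext fun x => ?_)
  have hscalar := sum_isSquare_sum_isSquare_sum_pairs hF (ZMod.isPrimitive_stdAddChar p) hd_odd hd
    V hV (f x)
  simp only [AddMonoidAlgebra.coeff_sub, AddMonoidAlgebra.coeff_sum, AddMonoidAlgebra.coeff_smul,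
    Finsupp.sub_apply, Finsupp.coe_finsetSum, Finset.sum_apply, Finsupp.smul_apply, Lt_coeff,
    setElt_coeff, smul_eq_mul, xi_eq_stdAddChar, ZMod.card] at hscalar ⊢
  have hcond : (x ≠ 0 ∧ f x ≠ 0 ∧ IsSquare (f x)) ↔ (f x ≠ 0 ∧ IsSquare (f x)) :=
    and_iff_right_of_imp fun h hx => h.1 (by rw [hx, hf0])
  rw [hscalar]
  simp only [mem_filter, mem_univ, true_and, hcond, if_true, mul_one]

theorem stmt_15 (p n s : ℕ) (hp : p.Prime) [Fact p.Prime] [NeZero p] (hodd : Odd p) (hn : 0 < n) (hs : s ≤ n)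
    (K : Type) [Field K] [Fintype K] [DecidableEq K] [Algebra (ZMod p) K]
    (hcard : Fintype.card K = p ^ n)
    (f : K → ZMod p)
    (hplat : ∀ β : K, ‖walsh p K f β‖ ^ 2 = 0 ∨
      ‖walsh p K f β‖ ^ 2 = (p : ℝ) ^ (n + s))
    (hunbal : walsh p K f 0 ≠ 0)
    (hf0 : f 0 = 0)
    (h : ℕ) (hheven : Even h) (hhpos : 0 < h) (hhgcd : Nat.gcd (h - 1) (p - 1) = 1)
    (hhom : ∀ a : ZMod p, a ≠ 0 → ∀ x : K,
      f (algebraMap (ZMod p) K a * x) = a ^ h * f x)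
    (ε : ℤ) (hε : ε = 1 ∨ ε = -1)
    (g : K → ZMod p)
    (hwr : ∀ β : K, ‖walsh p K f β‖ ^ 2 = (p : ℝ) ^ (n + s) →
      walsh p K f β = (ε : ℂ) * sqrtPstar p ^ (n + s) * xi p (g β))
    (l : ℕ) (hleven : Even l) (hlpos : 0 < l) (hlgcd : Nat.gcd (l - 1) (p - 1) = 1)
    (hghom : ∀ a : ZMod p, a ≠ 0 → ∀ β : K,
      ‖walsh p K f β‖ ^ 2 = (p : ℝ) ^ (n + s) →
      g (algebraMap (ZMod p) K a * β) = a ^ l * g β)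
    (V : ZMod p → ZMod p → ZMod p)
    (hV : ∀ k t : ZMod p, k ≠ 0 → t ≠ 0 → k + t ≠ 0 →
      V k t ≠ 0 ∧ V k t ^ ((1 : ℤ) - l) = k ^ ((1 : ℤ) - l) + t ^ ((1 : ℤ) - l))
    (hns : Even (n + s)) :
    ∑ a ∈ Finset.univ.filter (fun a : ZMod p => a ≠ 0 ∧ IsSquare a),
        ∑ b ∈ Finset.univ.filter (fun b : ZMod p => b ≠ 0 ∧ IsSquare b),
          ∑ k ∈ Finset.univ.filter (fun k : ZMod p => k ≠ 0),
            ∑ t ∈ Finset.univ.filter (fun t : ZMod p => t ≠ 0 ∧ k + t ≠ 0),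
              xi p (-(a * t) - b * k) • Lt p K f (V k t) =
      (p : ℂ) • setElt K (Finset.univ.filter fun x : K => x ≠ 0 ∧ f x ≠ 0 ∧ IsSquare (f x)) - (((p : ℂ) - 1) / 2) • setElt K Finset.univ :=
  stmt_15_general p hodd K f hf0 l hleven hlpos hlgcd V hV
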